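/- arXiv:0905.3460 — 2 statements merged into one kernel-verified Lean document; each statement's English description precedes it below -/
import Mathlib

section
/- Let θ ∈ (0, π/2) and let u be a model eigenfunction of H(θ) with eigenvalue σ. Then ∫_{ℝ²₊} V_θ ∂_s³u · u ds dt = (3/2) sin θ · ∫_{ℝ²₊} ∂_s²u · u ds dt. -/
/-!
For fixed `t`, write `' = ∂_s`. Since `∂_s V_θ = -sin θ`, the function
`G = V_θ (u'' u - (u')² / 2) - (sin θ / 2) u u'` satisfies
`G' = V_θ u''' u - (3/2) sin θ u'' u`, and `G` vanishes at `s = ±∞` by the Schwartz decay of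
`u`. Hence the identity holds on every horizontal line `t = const`; the same decay justifies
integrating it over `t > 0` by Fubini.
-/

open Real MeasureTheory Set

noncomputable section

/-- Partial derivative with respect to the first variable. -/
def pd1 (u : ℝ → ℝ → ℝ) : ℝ → ℝ → ℝ := fun s t => deriv (fun x => u x t) s

/-- Partial derivative with respect to the second variable. -/
def pd2 (u : ℝ → ℝ → ℝ) : ℝ → ℝ → ℝ := fun s t => deriv (fun y => u s y) t

/-- The potential `V_θ(s,t) = t cos θ − s sin θ`. -/
def Vpot (θ : ℝ) : ℝ → ℝ → ℝ := fun s t => t * Real.cos θ - s * Real.sin θ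

/-- The operator `H(θ) = −∂_s² − ∂_t² + V_θ²` applied to `u`. -/
def Hop (θ : ℝ) (u : ℝ → ℝ → ℝ) : ℝ → ℝ → ℝ :=
  fun s t => - pd1 (pd1 u) s t - pd2 (pd2 u) s t + (Vpot θ s t)^2 * u s t

/-- Integral over the half-plane `{t > 0}` with respect to `ds dt`. -/
def intHalf (f : ℝ → ℝ → ℝ) : ℝ := ∫ s : ℝ, ∫ t in Set.Ioi (0:ℝ), f s t

/-- Schwartz-class on the closed half-plane: all iterated partial derivatives decay
faster than any power of `|s| + t`. -/
def SchwartzHalf (u : ℝ → ℝ → ℝ) : Prop :=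
  ∀ k l n : ℕ, ∃ C : ℝ, ∀ s t : ℝ, 0 ≤ t →
    |pd1^[k] (pd2^[l] u) s t| ≤ C * (1 + |s| + t) ^ (-(n:ℝ))

/-- A model eigenfunction of `H(θ)` with eigenvalue `σ`: smooth up to the boundary,
Schwartz-class, `L²`-normalized, Neumann boundary condition, and `H(θ)u = σu` on `{t ≥ 0}`. -/
structure IsModelEigen (θ : ℝ) (u : ℝ → ℝ → ℝ) (σ : ℝ) : Prop where
  smooth : ∀ n : ℕ, ContDiff ℝ n (fun p : ℝ × ℝ => u p.1 p.2)
  schwartz : SchwartzHalf u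
  normalized : intHalf (fun s t => (u s t)^2) = 1
  neumann : ∀ s : ℝ, pd2 u s 0 = 0
  eigen : ∀ s t : ℝ, 0 ≤ t → Hop θ u s t = σ * u s t

open Filter Topology Function
open scoped ContDiff

section RapidDecay

variable {E : Type*} [NormedAddCommGroup E]

def RapidDecayOn (S : Set E) (g : E → ℝ) : Prop :=
  ∀ n : ℕ, ∃ C, ∀ x ∈ S, |g x| * (1 + ‖x‖) ^ n ≤ C

namespace RapidDecayOn

variable {S : Set E} {f g : E → ℝ}

lemma abs_le (hf : RapidDecayOn S f) (n : ℕ) :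
    ∃ C, ∀ x ∈ S, |f x| ≤ C / (1 + ‖x‖) ^ n := by
  obtain ⟨C, hC⟩ := hf n
  exact ⟨C, fun x hx => (le_div_iff₀ (by positivity)).2 (hC x hx)⟩

lemma sub (hf : RapidDecayOn S f) (hg : RapidDecayOn S g) :
    RapidDecayOn S (fun x => f x - g x) := fun n => by
  obtain ⟨C, hC⟩ := hf n
  obtain ⟨D, hD⟩ := hg n
  refine ⟨C + D, fun x hx => ?_⟩
  calc |f x - g x| * (1 + ‖x‖) ^ n ≤ (|f x| + |g x|) * (1 + ‖x‖) ^ n := by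
        gcongr; exact abs_sub _ _
    _ ≤ C + D := by linarith [hC x hx, hD x hx]

lemma const_mul (hf : RapidDecayOn S f) (c : ℝ) : RapidDecayOn S (fun x => c * f x) := fun n => by
  obtain ⟨C, hC⟩ := hf n
  refine ⟨|c| * C, fun x hx => ?_⟩
  rw [abs_mul, mul_assoc]
  exact mul_le_mul_of_nonneg_left (hC x hx) (abs_nonneg c)

lemma mul (hf : RapidDecayOn S f) (hg : RapidDecayOn S g) :
    RapidDecayOn S (fun x => f x * g x) := fun n => by
  obtain ⟨C, hC⟩ := hf n
  obtain ⟨D, hD⟩ := hg 0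
  refine ⟨|C| * D, fun x hx => ?_⟩
  have hgD : |g x| ≤ D := by simpa using hD x hx
  calc |f x * g x| * (1 + ‖x‖) ^ n = (|f x| * (1 + ‖x‖) ^ n) * |g x| := by
        rw [abs_mul]; ring
    _ ≤ |C| * |g x| := by gcongr; exact (hC x hx).trans (le_abs_self C)
    _ ≤ |C| * D := by gcongr

lemma mul_of_abs_le {V : E → ℝ} {K : ℝ} (hV : ∀ x ∈ S, |V x| ≤ K * (1 + ‖x‖))
    (hg : RapidDecayOn S g) : RapidDecayOn S (fun x => V x * g x) := fun n => by
  obtain ⟨C, hC⟩ := hg (n + 1)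
  refine ⟨|K| * C, fun x hx => ?_⟩
  calc |V x * g x| * (1 + ‖x‖) ^ n = |V x| * (|g x| * (1 + ‖x‖) ^ n) := by
        rw [abs_mul]; ring
    _ ≤ K * (1 + ‖x‖) * (|g x| * (1 + ‖x‖) ^ n) := by gcongr; exact hV x hx
    _ = K * (|g x| * (1 + ‖x‖) ^ (n + 1)) := by ring
    _ ≤ |K| * (|g x| * (1 + ‖x‖) ^ (n + 1)) := by gcongr; exact le_abs_self K
    _ ≤ |K| * C := by gcongr; exact hC x hx

lemma tendsto_cocompact [ProperSpace E] (hg : RapidDecayOn univ g) :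
    Tendsto g (cocompact E) (𝓝 0) := by
  obtain ⟨C, hC⟩ := hg.abs_le 1
  refine squeeze_zero_norm (fun x => by simpa using hC x (mem_univ x)) ?_
  exact tendsto_const_nhds.div_atTop (tendsto_atTop_add_const_left _ 1 tendsto_norm_cocompact_atTop)

lemma integrableOn [NormedSpace ℝ E] [FiniteDimensional ℝ E] [MeasurableSpace E] [BorelSpace E]
    {μ : Measure E} [μ.IsAddHaarMeasure] (hS : MeasurableSet S) (hg : RapidDecayOn S g)
    (hm : AEStronglyMeasurable g (μ.restrict S)) : IntegrableOn g S μ := by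
  set d := Module.finrank ℝ E + 1 with hd
  have hdim : (Module.finrank ℝ E : ℝ) < d := by rw [hd]; push_cast; linarith
  obtain ⟨C, hC⟩ := hg.abs_le d
  have hbound : Integrable (fun x : E => C * (1 + ‖x‖) ^ (-(d : ℝ))) μ :=
    (integrable_one_add_norm hdim).const_mul C
  refine hbound.integrableOn.mono' hm (ae_restrict_of_forall_mem hS fun x hx => ?_)
  rw [Real.rpow_neg (by positivity), Real.rpow_natCast, ← div_eq_mul_inv]
  exact hC x hx

end RapidDecayOn

lemma RapidDecayOn.comp_prodMk_right {F : Type*} [NormedAddCommGroup F] {S : Set (E × F)}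
    {g : E × F → ℝ} (hg : RapidDecayOn S g) {y : F} (hS : ∀ x, (x, y) ∈ S) :
    RapidDecayOn univ (fun x => g (x, y)) := fun n => by
  obtain ⟨C, hC⟩ := hg n
  refine ⟨C, fun x _ => le_trans ?_ (hC (x, y) (hS x))⟩
  gcongr
  exact norm_fst_le (x, y)

end RapidDecay

lemma abs_sub_mul_le (c a x : ℝ) : |c - x * a| ≤ (|c| + |a|) * (1 + ‖x‖) := by
  rw [Real.norm_eq_abs]
  calc |c - x * a| ≤ |c| + |x| * |a| := by rw [← abs_mul]; exact abs_sub _ _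
    _ ≤ (|c| + |a|) * (1 + |x|) := by nlinarith [abs_nonneg c, abs_nonneg a, abs_nonneg x]

theorem integral_sub_mul_mul_deriv_three_mul {f f' f'' f''' : ℝ → ℝ} (c a : ℝ)
    (hf : ∀ x, HasDerivAt f (f' x) x) (hf' : ∀ x, HasDerivAt f' (f'' x) x)
    (hf'' : ∀ x, HasDerivAt f'' (f''' x) x)
    (h0 : RapidDecayOn univ f) (h1 : RapidDecayOn univ f') (h2 : RapidDecayOn univ f'')
    (h3 : RapidDecayOn univ f''') :
    ∫ x, (c - x * a) * f''' x * f x = 3 / 2 * a * ∫ x, f'' x * f x := by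
  have hV : ∀ x ∈ univ, |c - x * a| ≤ (|c| + |a|) * (1 + ‖x‖) :=
    fun x _ => abs_sub_mul_le c a x
  set G : ℝ → ℝ := fun x =>
    (c - x * a) * (f'' x * f x - 2⁻¹ * (f' x * f' x)) - a / 2 * (f x * f' x)
  have hG : ∀ x, HasDerivAt G ((c - x * a) * f''' x * f x - 3 / 2 * a * (f'' x * f x)) x := by
    intro x
    have hV' : HasDerivAt (fun y => c - y * a) (-a) x := by
      simpa using (hasDerivAt_mul_const a).const_sub c
    refine ((hV'.mul (((hf'' x).mul (hf x)).sub (((hf' x).mul (hf' x)).const_mul 2⁻¹))).sub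
      (((hf x).mul (hf' x)).const_mul (a / 2))).congr_deriv ?_
    simp only [Pi.mul_apply, Pi.sub_apply]
    ring
  have hGdecay : RapidDecayOn univ G :=
    (((h2.mul h0).sub ((h1.mul h1).const_mul _)).mul_of_abs_le hV).sub ((h0.mul h1).const_mul _)
  have hf'''meas : Measurable f''' := by
    rw [show f''' = deriv f'' from funext fun x => (hf'' x).deriv.symm]
    exact measurable_deriv f''
  have hfc : Continuous f := continuous_iff_continuousAt.2 fun x => (hf x).continuousAt
  have hf''c : Continuous f'' := continuous_iff_continuousAt.2 fun x => (hf'' x).continuousAt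
  have hint₁ : Integrable (fun x => (c - x * a) * f''' x * f x) :=
    integrableOn_univ.1 <| ((h3.mul_of_abs_le hV).mul h0).integrableOn MeasurableSet.univ
      (by fun_prop)
  have hint₂ : Integrable (fun x => f'' x * f x) :=
    integrableOn_univ.1 <| (h2.mul h0).integrableOn MeasurableSet.univ (by fun_prop)
  have hFTC := integral_of_hasDerivAt_of_tendsto hG (hint₁.sub (hint₂.const_mul _))
    (hGdecay.tendsto_cocompact.mono_left atBot_le_cocompact)
    (hGdecay.tendsto_cocompact.mono_left atTop_le_cocompact)
  rw [integral_sub hint₁ (hint₂.const_mul _), integral_const_mul] at hFTC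
  linarith

section HalfPlane

variable {u : ℝ → ℝ → ℝ}

lemma hasDerivAt_fderiv_apply_one_zero {s t : ℝ} (hu : DifferentiableAt ℝ (uncurry u) (s, t)) :
    HasDerivAt (fun x => u x t) (fderiv ℝ (uncurry u) (s, t) (1, 0)) s :=
  hu.hasFDerivAt.comp_hasDerivAt_of_eq s ((hasDerivAt_id s).prodMk (hasDerivAt_const s t)) rfl

lemma hasDerivAt_pd1 {s t : ℝ} (hu : DifferentiableAt ℝ (uncurry u) (s, t)) :
    HasDerivAt (fun x => u x t) (pd1 u s t) s := by
  have h := hasDerivAt_fderiv_apply_one_zero hu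
  rwa [pd1, h.deriv]

lemma ContDiff.uncurry_pd1 (hu : ContDiff ℝ ∞ (uncurry u)) :
    ContDiff ℝ ∞ (uncurry (pd1 u)) := by
  have hpd1 : uncurry (pd1 u) = fun p => fderiv ℝ (uncurry u) p (1, 0) := funext fun p =>
    (hasDerivAt_fderiv_apply_one_zero (hu.differentiable (by simp) (p.1, p.2))).deriv
  rw [hpd1]
  exact (hu.fderiv_right (by simp)).clm_apply contDiff_const

lemma ContDiff.uncurry_pd1_iterate (hu : ContDiff ℝ ∞ (uncurry u)) (k : ℕ) :
    ContDiff ℝ ∞ (uncurry (pd1^[k] u)) := by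
  induction k with
  | zero => exact hu
  | succ k ih => rw [iterate_succ_apply']; exact ih.uncurry_pd1

lemma SchwartzHalf.rapidDecayOn_pd1_iterate (hu : SchwartzHalf u) (k : ℕ) :
    RapidDecayOn (univ ×ˢ Ici 0) (uncurry (pd1^[k] u)) := fun n => by
  obtain ⟨C, hC⟩ := hu k 0 n
  refine ⟨C, fun p hp => ?_⟩
  have ht : 0 ≤ p.2 := hp.2
  have hw : 0 < 1 + |p.1| + p.2 := by positivity
  have hbound := hC p.1 p.2 ht
  rw [iterate_zero_apply, Real.rpow_neg hw.le, Real.rpow_natCast, ← div_eq_mul_inv,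
    le_div_iff₀ (by positivity)] at hbound
  have hnorm : 1 + ‖p‖ ≤ 1 + |p.1| + p.2 := by
    rw [Prod.norm_def, Real.norm_eq_abs, Real.norm_eq_abs, abs_of_nonneg ht, add_assoc]
    exact add_le_add_right (max_le_add_of_nonneg (abs_nonneg _) ht) 1
  exact le_trans (mul_le_mul_of_nonneg_left (pow_le_pow_left₀ (by positivity) hnorm n)
    (abs_nonneg _)) hbound

lemma abs_Vpot_le (θ : ℝ) (p : ℝ × ℝ) : |Vpot θ p.1 p.2| ≤ 2 * (1 + ‖p‖) := by
  have h1 : |p.1| ≤ ‖p‖ := norm_fst_le p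
  have h2 : |p.2| ≤ ‖p‖ := norm_snd_le p
  calc |Vpot θ p.1 p.2| ≤ |p.2 * cos θ| + |p.1 * sin θ| := abs_sub _ _
    _ ≤ |p.2| + |p.1| := by
        rw [abs_mul, abs_mul]
        gcongr
        · exact mul_le_of_le_one_right (abs_nonneg _) (abs_cos_le_one θ)
        · exact mul_le_of_le_one_right (abs_nonneg _) (abs_sin_le_one θ)
    _ ≤ 2 * (1 + ‖p‖) := by linarith [norm_nonneg p]

lemma intHalf_eq_setIntegral_integral {f : ℝ → ℝ → ℝ} (hc : Continuous (uncurry f))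
    (hf : RapidDecayOn (univ ×ˢ Ici 0) (uncurry f)) :
    intHalf f = ∫ t in Ioi 0, ∫ s, f s t := by
  have hint := (hf.integrableOn (μ := volume) (MeasurableSet.univ.prod measurableSet_Ici)
    hc.aestronglyMeasurable.restrict).mono_set (prod_mono subset_rfl Ioi_subset_Ici_self)
  rw [IntegrableOn, Measure.volume_eq_prod, ← Measure.prod_restrict, Measure.restrict_univ]
    at hint
  exact integral_integral_swap hint

end HalfPlane

theorem ds4_identity_general (θ : ℝ)
    (u : ℝ → ℝ → ℝ) (σ : ℝ) (hu : IsModelEigen θ u σ) :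
    intHalf (fun s t => Vpot θ s t * pd1 (pd1 (pd1 u)) s t * u s t) =
      3 / 2 * Real.sin θ * intHalf (fun s t => pd1 (pd1 u) s t * u s t) := by
  have hsmooth : ∀ k, ContDiff ℝ ∞ (uncurry (pd1^[k] u)) :=
    (contDiff_infty.2 hu.smooth).uncurry_pd1_iterate
  have hdecay : ∀ k, RapidDecayOn (univ ×ˢ Ici 0) (uncurry (pd1^[k] u)) :=
    hu.schwartz.rapidDecayOn_pd1_iterate
  have hV : ∀ p ∈ univ ×ˢ Ici (0 : ℝ), |Vpot θ p.1 p.2| ≤ 2 * (1 + ‖p‖) :=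
    fun p _ => abs_Vpot_le θ p
  have hVc : Continuous (uncurry (Vpot θ)) := by unfold Vpot; fun_prop
  rw [intHalf_eq_setIntegral_integral ?cont₁ ?decay₁,
    intHalf_eq_setIntegral_integral ?cont₂ ?decay₂, ← integral_const_mul]
  case cont₁ => exact (hVc.mul (hsmooth 3).continuous).mul (hsmooth 0).continuous
  case decay₁ => exact ((hdecay 3).mul_of_abs_le hV).mul (hdecay 0)
  case cont₂ => exact (hsmooth 2).continuous.mul (hsmooth 0).continuous
  case decay₂ => exact (hdecay 2).mul (hdecay 0)
  refine setIntegral_congr_fun measurableSet_Ioi fun t ht => ?_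
  have hslice (k : ℕ) : RapidDecayOn univ (fun s => pd1^[k] u s t) :=
    (hdecay k).comp_prodMk_right fun s => ⟨mem_univ s, mem_Ici.2 (le_of_lt ht)⟩
  have hderiv (k : ℕ) (s : ℝ) : HasDerivAt (fun x => pd1^[k] u x t) (pd1^[k + 1] u s t) s := by
    rw [iterate_succ_apply']
    exact hasDerivAt_pd1 ((hsmooth k).differentiable (by simp) (s, t))
  exact integral_sub_mul_mul_deriv_three_mul (t * cos θ) (sin θ) (hderiv 0) (hderiv 1) (hderiv 2)
    (hslice 0) (hslice 1) (hslice 2) (hslice 3)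

/-- Lemma 2.5: `∫ V_θ ∂_s³u · u = (3/2) sin θ ∫ ∂_s²u · u`. -/
theorem ds4_identity (θ : ℝ) (hθ : θ ∈ Set.Ioo 0 (π/2))
    (u : ℝ → ℝ → ℝ) (σ : ℝ) (hu : IsModelEigen θ u σ) :
    intHalf (fun s t => Vpot θ s t * pd1 (pd1 (pd1 u)) s t * u s t) =
      3 / 2 * Real.sin θ * intHalf (fun s t => pd1 (pd1 u) s t * u s t) :=
  ds4_identity_general θ u σ hu
end
end

section
/- Let θ ∈ (0, π/2) and let u be a model eigenfunction of H(θ) with eigenvalue σ, and set f₀ := (2 sin(2θ))⁻¹ (sin²θ · s² u − ∂_s² u). Then 4 cos θ · ∫_{ℝ²₊} t ∂_s f₀ · u ds dt = sin θ · ∫_{ℝ²₊} t s u² ds dt. -/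
/-! With `g = a s² u - ∂ₛ²u` one has the pointwise identity
`t (∂ₛg) u = a t s u² + ∂ₛ[t/2 (a s² u² - 2 u ∂ₛ²u + (∂ₛu)²)]`. For each `t` the total
`s`-derivative integrates to zero because `u` decays rapidly, so `∫ t (∂ₛg) u = a ∫ t s u²`.
With `a = sin²θ`, the prefactor `(2 sin 2θ)⁻¹ = (4 sin θ cos θ)⁻¹` of `f₀` gives the constant
`sin θ / (4 cos θ)`. -/

open Real MeasureTheory Set

noncomputable section

open Filter Function Topology

section PartialDerivatives

variable {v : ℝ → ℝ → ℝ}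

lemma hasDerivAt_fderiv_fst {s t : ℝ} (hv : DifferentiableAt ℝ (uncurry v) (s, t)) :
    HasDerivAt (fun x => v x t) (fderiv ℝ (uncurry v) (s, t) (1, 0)) s :=
  hv.hasFDerivAt.comp_hasDerivAt (f := fun x => (x, t)) s
    ((hasDerivAt_id s).prodMk (hasDerivAt_const s t))

lemma pd1_eq_fderiv {s t : ℝ} (hv : DifferentiableAt ℝ (uncurry v) (s, t)) :
    pd1 v s t = fderiv ℝ (uncurry v) (s, t) (1, 0) :=
  (hasDerivAt_fderiv_fst hv).deriv

lemma hasDerivAt_pd1_of_contDiff {n : WithTop ℕ∞} (hv : ContDiff ℝ n (uncurry v)) (hn : n ≠ 0)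
    (s t : ℝ) : HasDerivAt (fun x => v x t) (pd1 v s t) s := by
  have hd := (hv.differentiable hn).differentiableAt (x := (s, t))
  simpa only [pd1_eq_fderiv hd] using hasDerivAt_fderiv_fst hd

lemma contDiff_uncurry_pd1 {n : WithTop ℕ∞} (hv : ContDiff ℝ (n + 1) (uncurry v)) :
    ContDiff ℝ n (uncurry (pd1 v)) := by
  have hd : Differentiable ℝ (uncurry v) := hv.differentiable (by simp)
  have h : uncurry (pd1 v) = fun p => fderiv ℝ (uncurry v) p (1, 0) :=
    funext fun p => pd1_eq_fderiv (hd p)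
  rw [h]
  exact (hv.fderiv_right le_rfl).clm_apply contDiff_const

lemma pd1_const_mul (c : ℝ) (v : ℝ → ℝ → ℝ) :
    pd1 (fun s t => c * v s t) = fun s t => c * pd1 v s t := by
  ext s t
  exact congrFun (deriv_const_mul_field' c) s

end PartialDerivatives

section RapidDecay

def RapidDecay (v : ℝ → ℝ → ℝ) : Prop :=
  ∀ n : ℕ, ∃ C : ℝ, ∀ s t : ℝ, 0 ≤ t → (1 + |s| + t) ^ n * |v s t| ≤ C

lemma SchwartzHalf.rapidDecay {u : ℝ → ℝ → ℝ} (hu : SchwartzHalf u) (k l : ℕ) :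
    RapidDecay (pd1^[k] (pd2^[l] u)) := by
  intro n
  obtain ⟨C, hC⟩ := hu k l n
  refine ⟨C, fun s t ht => ?_⟩
  have hX : 0 < 1 + |s| + t := by positivity
  calc (1 + |s| + t) ^ n * |pd1^[k] (pd2^[l] u) s t|
      ≤ (1 + |s| + t) ^ n * (C * (1 + |s| + t) ^ (-(n : ℝ))) := by gcongr; exact hC s t ht
    _ = C := by
      rw [rpow_neg hX.le, rpow_natCast]
      field_simp

namespace RapidDecay

variable {v w : ℝ → ℝ → ℝ}

lemma add (hv : RapidDecay v) (hw : RapidDecay w) : RapidDecay fun s t => v s t + w s t := by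
  intro n
  obtain ⟨C₁, hC₁⟩ := hv n
  obtain ⟨C₂, hC₂⟩ := hw n
  refine ⟨C₁ + C₂, fun s t ht => ?_⟩
  calc (1 + |s| + t) ^ n * |v s t + w s t|
      ≤ (1 + |s| + t) ^ n * (|v s t| + |w s t|) := by gcongr; exact abs_add_le _ _
    _ ≤ C₁ + C₂ := by rw [mul_add]; exact add_le_add (hC₁ s t ht) (hC₂ s t ht)

lemma const_mul (hv : RapidDecay v) (c : ℝ) : RapidDecay fun s t => c * v s t := by
  intro n
  obtain ⟨C, hC⟩ := hv n
  refine ⟨|c| * C, fun s t ht => ?_⟩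
  rw [abs_mul, mul_left_comm]
  exact mul_le_mul_of_nonneg_left (hC s t ht) (abs_nonneg c)

lemma sub (hv : RapidDecay v) (hw : RapidDecay w) : RapidDecay fun s t => v s t - w s t := by
  simpa only [sub_eq_add_neg, neg_one_mul] using hv.add (hw.const_mul (-1))

lemma mul (hv : RapidDecay v) (hw : RapidDecay w) : RapidDecay fun s t => v s t * w s t := by
  intro n
  obtain ⟨C₁, hC₁⟩ := hv n
  obtain ⟨C₂, hC₂⟩ := hw 0
  refine ⟨C₁ * C₂, fun s t ht => ?_⟩
  have h₂ : |w s t| ≤ C₂ := by simpa using hC₂ s t ht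
  rw [abs_mul, ← mul_assoc]
  exact mul_le_mul (hC₁ s t ht) h₂ (abs_nonneg _) ((by positivity : (0 : ℝ) ≤ _ * _).trans (hC₁ s t ht))

lemma weight_mul (hv : RapidDecay v) {f : ℝ → ℝ → ℝ} (hf : ∀ s t, 0 ≤ t → |f s t| ≤ 1 + |s| + t) :
    RapidDecay fun s t => f s t * v s t := by
  intro n
  obtain ⟨C, hC⟩ := hv (n + 1)
  refine ⟨C, fun s t ht => ?_⟩
  calc (1 + |s| + t) ^ n * |f s t * v s t|
      ≤ (1 + |s| + t) ^ n * ((1 + |s| + t) * |v s t|) := by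
        rw [abs_mul]; gcongr; exact hf s t ht
    _ = (1 + |s| + t) ^ (n + 1) * |v s t| := by ring
    _ ≤ C := hC s t ht

lemma fst_mul (hv : RapidDecay v) : RapidDecay fun s t => s * v s t :=
  hv.weight_mul fun s t ht => by linarith

lemma snd_mul (hv : RapidDecay v) : RapidDecay fun s t => t * v s t :=
  hv.weight_mul fun s t ht => by rw [abs_of_nonneg ht]; linarith [abs_nonneg s]

lemma abs_le_inv_one_add_sq (hv : RapidDecay v) :
    ∃ C : ℝ, ∀ s t : ℝ, 0 ≤ t → |v s t| ≤ C * (1 + s ^ 2)⁻¹ := by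
  obtain ⟨C, hC⟩ := hv 2
  refine ⟨C, fun s t ht => ?_⟩
  have hs : 1 + s ^ 2 ≤ (1 + |s| + t) ^ 2 := by nlinarith [sq_abs s, abs_nonneg s]
  rw [← div_eq_mul_inv, le_div_iff₀ (by positivity)]
  calc |v s t| * (1 + s ^ 2) ≤ |v s t| * (1 + |s| + t) ^ 2 := by gcongr
    _ ≤ C := by rw [mul_comm]; exact hC s t ht

lemma abs_le_inv_one_add_sq_mul (hv : RapidDecay v) :
    ∃ C : ℝ, ∀ s t : ℝ, 0 ≤ t → |v s t| ≤ C * ((1 + s ^ 2) * (1 + t ^ 2))⁻¹ := by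
  obtain ⟨C, hC⟩ := hv 4
  refine ⟨C, fun s t ht => ?_⟩
  have hs : 1 + s ^ 2 ≤ (1 + |s| + t) ^ 2 := by nlinarith [sq_abs s, abs_nonneg s]
  have ht' : 1 + t ^ 2 ≤ (1 + |s| + t) ^ 2 := by nlinarith [abs_nonneg s]
  rw [← div_eq_mul_inv, le_div_iff₀ (by positivity)]
  calc |v s t| * ((1 + s ^ 2) * (1 + t ^ 2))
      ≤ |v s t| * ((1 + |s| + t) ^ 2 * (1 + |s| + t) ^ 2) := by gcongr
    _ = (1 + |s| + t) ^ 4 * |v s t| := by ring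
    _ ≤ C := hC s t ht

lemma integrable (hv : RapidDecay v) (hc : Continuous (uncurry v)) :
    Integrable (uncurry v) (volume.prod (volume.restrict (Ioi 0))) := by
  obtain ⟨C, hC⟩ := hv.abs_le_inv_one_add_sq_mul
  have hdom : Integrable (fun p : ℝ × ℝ => C * ((1 + p.1 ^ 2)⁻¹ * (1 + p.2 ^ 2)⁻¹))
      (volume.prod (volume.restrict (Ioi 0))) :=
    (integrable_inv_one_add_sq.mul_prod integrable_inv_one_add_sq.restrict).const_mul C
  refine hdom.mono' hc.aestronglyMeasurable ?_
  filter_upwards [Measure.quasiMeasurePreserving_snd.ae (ae_restrict_mem measurableSet_Ioi)]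
    with p hp
  rw [← mul_inv]
  exact hC p.1 p.2 (le_of_lt hp)

lemma integrable_fst (hv : RapidDecay v) (hc : Continuous (uncurry v)) {t : ℝ} (ht : 0 ≤ t) :
    Integrable fun s => v s t := by
  obtain ⟨C, hC⟩ := hv.abs_le_inv_one_add_sq
  refine (integrable_inv_one_add_sq.const_mul C).mono'
    (hc.comp (continuous_id.prodMk continuous_const)).aestronglyMeasurable ?_
  exact Eventually.of_forall fun s => hC s t ht

lemma tendsto_cocompact (hv : RapidDecay v) {t : ℝ} (ht : 0 ≤ t) :
    Tendsto (fun s => v s t) (cocompact ℝ) (𝓝 0) := by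
  obtain ⟨C, hC⟩ := hv.abs_le_inv_one_add_sq
  have hsq : Tendsto (fun s : ℝ => 1 + s ^ 2) (cocompact ℝ) atTop := by
    refine tendsto_atTop_add_const_left _ 1 ?_
    simpa only [comp_def, norm_eq_abs, sq_abs] using
      (tendsto_pow_atTop two_ne_zero).comp (tendsto_norm_cocompact_atTop (E := ℝ))
  have hbound : Tendsto (fun s : ℝ => C * (1 + s ^ 2)⁻¹) (cocompact ℝ) (𝓝 0) := by
    simpa using (tendsto_inv_atTop_zero.comp hsq).const_mul C
  exact squeeze_zero_norm (fun s => hC s t ht) hbound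

end RapidDecay

end RapidDecay

section HalfPlaneIntegral

variable {f g : ℝ → ℝ → ℝ}

lemma intHalf_eq_integral_prod (hf : Integrable (uncurry f) (volume.prod (volume.restrict (Ioi 0)))) :
    intHalf f = ∫ p, uncurry f p ∂(volume.prod (volume.restrict (Ioi 0))) :=
  (integral_prod _ hf).symm

lemma intHalf_add (hf : Integrable (uncurry f) (volume.prod (volume.restrict (Ioi 0))))
    (hg : Integrable (uncurry g) (volume.prod (volume.restrict (Ioi 0)))) :
    intHalf (fun s t => f s t + g s t) = intHalf f + intHalf g := by
  rw [intHalf_eq_integral_prod hf, intHalf_eq_integral_prod hg,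
    intHalf_eq_integral_prod (f := fun s t => f s t + g s t) (hf.add hg), ← integral_add hf hg]
  rfl

lemma intHalf_const_mul (c : ℝ) (f : ℝ → ℝ → ℝ) :
    intHalf (fun s t => c * f s t) = c * intHalf f := by
  simp only [intHalf, integral_const_mul]

lemma intHalf_eq_zero_of_hasDerivAt {G G' : ℝ → ℝ → ℝ}
    (hG : ∀ s t, HasDerivAt (fun x => G x t) (G' s t) s) (hG_decay : RapidDecay G)
    (hG'_decay : RapidDecay G') (hG'_cont : Continuous (uncurry G')) : intHalf G' = 0 := by
  rw [intHalf, integral_integral_swap (hG'_decay.integrable hG'_cont)]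
  refine integral_eq_zero_of_ae ?_
  filter_upwards [ae_restrict_mem measurableSet_Ioi] with t ht
  have hlim := hG_decay.tendsto_cocompact (le_of_lt ht)
  simpa using integral_of_hasDerivAt_of_tendsto (fun s => hG s t)
    (hG'_decay.integrable_fst hG'_cont (le_of_lt ht))
    (hlim.mono_left atBot_le_cocompact) (hlim.mono_left atTop_le_cocompact)

end HalfPlaneIntegral

section MomentIdentity

variable {u : ℝ → ℝ → ℝ}

lemma hasDerivAt_moment_antideriv (a : ℝ) (hu : ContDiff ℝ 3 (uncurry u)) (s t : ℝ) :
    HasDerivAt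
      (fun x => t / 2 * (a * x ^ 2 * u x t ^ 2 - 2 * pd1 (pd1 u) x t * u x t + pd1 u x t ^ 2))
      (t * (a * (s * u s t ^ 2 + s ^ 2 * u s t * pd1 u s t) - pd1 (pd1 (pd1 u)) s t * u s t)) s := by
  have hu1 : ContDiff ℝ 2 (uncurry (pd1 u)) := contDiff_uncurry_pd1 hu
  have hu2 : ContDiff ℝ 1 (uncurry (pd1 (pd1 u))) := contDiff_uncurry_pd1 hu1
  have d0 := hasDerivAt_pd1_of_contDiff hu (by simp) s t
  have d1 := hasDerivAt_pd1_of_contDiff hu1 (by simp) s t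
  have d2 := hasDerivAt_pd1_of_contDiff hu2 (by simp) s t
  refine ((((hasDerivAt_pow 2 s).const_mul a).fun_mul (d0.fun_pow 2)).fun_sub
    ((d2.const_mul 2).fun_mul d0) |>.fun_add (d1.fun_pow 2)).const_mul (t / 2) |>.congr_deriv ?_
  norm_num
  ring

lemma mul_pd1_eq_moment_add (a : ℝ) (hu : ContDiff ℝ 3 (uncurry u)) (s t : ℝ) :
    t * pd1 (fun s t => a * s ^ 2 * u s t - pd1 (pd1 u) s t) s t * u s t =
      a * (t * s * u s t ^ 2) +
        t * (a * (s * u s t ^ 2 + s ^ 2 * u s t * pd1 u s t) - pd1 (pd1 (pd1 u)) s t * u s t) := by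
  have hu1 : ContDiff ℝ 2 (uncurry (pd1 u)) := contDiff_uncurry_pd1 hu
  have hu2 : ContDiff ℝ 1 (uncurry (pd1 (pd1 u))) := contDiff_uncurry_pd1 hu1
  have d0 := hasDerivAt_pd1_of_contDiff hu (by simp) s t
  have d2 := hasDerivAt_pd1_of_contDiff hu2 (by simp) s t
  have hd : HasDerivAt (fun x => a * x ^ 2 * u x t - pd1 (pd1 u) x t)
      (a * (2 * s) * u s t + a * s ^ 2 * pd1 u s t - pd1 (pd1 (pd1 u)) s t) s := by
    simpa using (((hasDerivAt_pow 2 s).const_mul a).fun_mul d0).fun_sub d2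
  rw [pd1, hd.deriv]
  ring

lemma intHalf_mul_pd1_moment_eq (a : ℝ) (hu : ContDiff ℝ 3 (uncurry u))
    (hdecay : ∀ k, RapidDecay (pd1^[k] u)) :
    intHalf (fun s t => t * pd1 (fun s t => a * s ^ 2 * u s t - pd1 (pd1 u) s t) s t * u s t) =
      a * intHalf (fun s t => t * s * u s t ^ 2) := by
  have hu1 : ContDiff ℝ 2 (uncurry (pd1 u)) := contDiff_uncurry_pd1 hu
  have hu3 : ContDiff ℝ 0 (uncurry (pd1 (pd1 (pd1 u)))) :=
    contDiff_uncurry_pd1 (contDiff_uncurry_pd1 hu1)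
  have c0 := hu.continuous
  have c1 := hu1.continuous
  have c3 := hu3.continuous
  have r0 : RapidDecay u := hdecay 0
  have r1 : RapidDecay (pd1 u) := hdecay 1
  have r2 : RapidDecay (pd1 (pd1 u)) := hdecay 2
  have r3 : RapidDecay (pd1 (pd1 (pd1 u))) := hdecay 3
  have hQ : RapidDecay fun s t => a * (t * s * u s t ^ 2) := by
    convert ((r0.mul r0).fst_mul.snd_mul).const_mul a using 1
    ext s t; ring
  have hG : RapidDecay fun s t =>
      t / 2 * (a * s ^ 2 * u s t ^ 2 - 2 * pd1 (pd1 u) s t * u s t + pd1 u s t ^ 2) := by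
    convert ((((r0.mul r0).fst_mul.fst_mul.const_mul a).sub ((r2.mul r0).const_mul 2)).add
      (r1.mul r1)).snd_mul.const_mul (1 / 2) using 1
    ext s t; ring
  have hG' : RapidDecay fun s t =>
      t * (a * (s * u s t ^ 2 + s ^ 2 * u s t * pd1 u s t) - pd1 (pd1 (pd1 u)) s t * u s t) := by
    convert ((((r0.mul r0).fst_mul.add ((r0.mul r1).fst_mul.fst_mul)).const_mul a).sub
      (r3.mul r0)).snd_mul using 1
    ext s t; ring
  simp_rw [mul_pd1_eq_moment_add a hu]
  rw [intHalf_add (hQ.integrable (by fun_prop)) (hG'.integrable (by fun_prop)),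
    intHalf_const_mul, intHalf_eq_zero_of_hasDerivAt (hasDerivAt_moment_antideriv a hu) hG hG'
      (by fun_prop), add_zero]

end MomentIdentity

/-- Lemma 2.6: `4 cos θ ∫ t ∂_s f₀ · u = sin θ ∫ t s u²`. -/
theorem f0_moment_identity (θ : ℝ) (hθ : θ ∈ Set.Ioo 0 (π/2))
    (u : ℝ → ℝ → ℝ) (σ : ℝ) (hu : IsModelEigen θ u σ)
    (f₀ : ℝ → ℝ → ℝ)
    (hf₀ : ∀ s t : ℝ, f₀ s t =
      (2 * Real.sin (2*θ))⁻¹ * (Real.sin θ ^ 2 * s^2 * u s t - pd1 (pd1 u) s t)) :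
    4 * Real.cos θ * intHalf (fun s t => t * pd1 f₀ s t * u s t) =
      Real.sin θ * intHalf (fun s t => t * s * (u s t)^2) := by
  have hsin : Real.sin θ ≠ 0 := (sin_pos_of_pos_of_lt_pi hθ.1 (by linarith [hθ.2, pi_pos])).ne'
  have hcos : Real.cos θ ≠ 0 := (cos_pos_of_mem_Ioo ⟨by linarith [hθ.1, pi_pos], hθ.2⟩).ne'
  have hmoment := intHalf_mul_pd1_moment_eq (u := u) (Real.sin θ ^ 2) (by exact_mod_cast hu.smooth 3)
    fun k => hu.schwartz.rapidDecay k 0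
  have hf : f₀ = fun s t =>
      (2 * Real.sin (2*θ))⁻¹ * (Real.sin θ ^ 2 * s^2 * u s t - pd1 (pd1 u) s t) :=
    funext₂ hf₀
  simp_rw [hf, pd1_const_mul, mul_assoc, mul_left_comm _ (2 * Real.sin (2*θ))⁻¹]
  rw [intHalf_const_mul]
  simp_rw [← mul_assoc]
  rw [hmoment, sin_two_mul]
  field_simp
  ring
end
end
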